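/- Under the hypotheses of the previous two lemmas (ε² < 1/6, ξ ≤ ε, w = (w⁺; w⁻; v) with ‖w‖² = 2n, ‖w‖₀ ≤ 2(1+ξ²)n, ‖X̃w‖² ≤ (1+ε²)n), we have ‖w⁺‖² + ‖w⁻‖² > (1 - 25ξ)n. -/

import Mathlib

/-!
Write `w = (w⁺, w⁻, v)` and let `v̄` be the mean of `v`. The bound on `‖X̃w‖²` forces
`‖v - v̄‖² + ‖w⁺ + w⁻ - v‖² ≤ 2ξ²n`, hence also `‖w⁺ + w⁻ - v̄‖² ≤ 4ξ²n`. By the sparsity budget,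
every coordinate where both `w⁺ᵢ, w⁻ᵢ` are nonzero is paid for by a zero of `v` or a common zero
of `w⁺, w⁻`, and each of those costs `v̄²` in `‖v - v̄‖²` or in `‖w⁺ + w⁻ - v̄‖²`. At every other
coordinate `(w⁺ᵢ)² + (w⁻ᵢ)² = (w⁺ᵢ + w⁻ᵢ)² ≈ v̄²`, while `n v̄² = 2n - ‖w⁺‖² - ‖w⁻‖² - ‖v - v̄‖²`.
Together this gives `‖w⁺‖² + ‖w⁻‖² ≥ (1 - 3ξ - 6ξ²) n`.
-/

open Finset Matrix
open scoped BigOperators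

/-- The matrix `X̃` of equation (7), with blocks
`[I,0,0; 0,I,0; 0,0,ξ⁻¹P; ξ⁻¹I,ξ⁻¹I,-ξ⁻¹I; εΦ,0,-εI']`, where `P = I - (1/n)𝟙𝟙ᵀ` and
`I'` is the `n×n` identity truncated to `m` rows. Rows are indexed by
`Fin n ⊕ Fin n ⊕ Fin n ⊕ Fin n ⊕ Fin m` and columns by `Fin n ⊕ Fin n ⊕ Fin n`. -/
noncomputable def Xt (n m : ℕ) (Φ : Matrix (Fin m) (Fin n) ℝ) (ε ξ : ℝ) :
    Matrix (Fin n ⊕ Fin n ⊕ Fin n ⊕ Fin n ⊕ Fin m) (Fin n ⊕ Fin n ⊕ Fin n) ℝ :=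
  Matrix.of fun i j =>
    match i, j with
    | .inl i, .inl j => if i = j then 1 else 0
    | .inl _, _ => 0
    | .inr (.inl i), .inr (.inl j) => if i = j then 1 else 0
    | .inr (.inl _), _ => 0
    | .inr (.inr (.inl i)), .inr (.inr j) => ξ⁻¹ * ((if i = j then 1 else 0) - 1 / n)
    | .inr (.inr (.inl _)), _ => 0
    | .inr (.inr (.inr (.inl i))), .inl j => ξ⁻¹ * (if i = j then 1 else 0)
    | .inr (.inr (.inr (.inl i))), .inr (.inl j) => ξ⁻¹ * (if i = j then 1 else 0)
    | .inr (.inr (.inr (.inl i))), .inr (.inr j) => -(ξ⁻¹) * (if i = j then 1 else 0)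
    | .inr (.inr (.inr (.inr i))), .inl j => ε * Φ i j
    | .inr (.inr (.inr (.inr _))), .inr (.inl _) => 0
    | .inr (.inr (.inr (.inr i))), .inr (.inr j) =>
        -ε * (if (i : ℕ) = (j : ℕ) then 1 else 0)

section

variable {ι : Type*} [Fintype ι]

lemma sum_sq_sub_expect (v : ι → ℝ) :
    ∑ i, (v i - 𝔼 j, v j) ^ 2 = ∑ i, v i ^ 2 - Fintype.card ι * (𝔼 j, v j) ^ 2 := by
  have hsum : ∑ i, v i = Fintype.card ι * 𝔼 j, v j := (Fintype.card_mul_expect v).symm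
  simp only [sub_sq, sum_add_distrib, sum_sub_distrib, ← sum_mul, ← mul_sum, hsum,
    sum_const, card_univ, nsmul_eq_mul]
  ring

lemma card_add_card_add_card_and_add_card_or (P Q : ι → Prop) [DecidablePred P]
    [DecidablePred Q] :
    #{i | P i} + #{i | Q i} + #{i | ¬P i ∧ ¬Q i} + #{i | ¬P i ∨ ¬Q i} =
      2 * Fintype.card ι := by
  simp only [card_filter, ← sum_add_distrib]
  calc _ = ∑ _i : ι, 2 :=
        sum_congr rfl fun i _ => by by_cases hp : P i <;> by_cases hq : Q i <;> simp [hp, hq]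
    _ = _ := by rw [sum_const, card_univ, smul_eq_mul, mul_comm]

lemma card_sub_card_zero_or_zero_le (p q v : ι → ℝ) {c : ℝ}
    (hsupp : (#{i | p i ≠ 0} + #{i | q i ≠ 0} + #{i | v i ≠ 0} : ℝ) ≤ 2 * Fintype.card ι + c) :
    Fintype.card ι - #{i | p i = 0 ∨ q i = 0} ≤ c + #{i | p i = 0 ∧ q i = 0} + #{i | v i = 0} := by
  have hpq : (#{i | p i ≠ 0} + #{i | q i ≠ 0} + #{i | p i = 0 ∧ q i = 0} +
      #{i | p i = 0 ∨ q i = 0} : ℝ) = 2 * Fintype.card ι := by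
    have := card_add_card_add_card_and_add_card_or (p · ≠ 0) (q · ≠ 0)
    simp only [not_not] at this
    exact_mod_cast this
  have hv : (#{i | v i ≠ 0} + #{i | v i = 0} : ℝ) = Fintype.card ι := by
    have := card_filter_add_card_filter_not (s := univ) (v · ≠ 0)
    simp only [not_not, card_univ] at this
    exact_mod_cast this
  linarith

lemma card_mul_sq_le_sum_sq_sub {u : ι → ℝ} {s : Finset ι} (hs : ∀ i ∈ s, u i = 0) (c : ℝ) :
    #s * c ^ 2 ≤ ∑ i, (u i - c) ^ 2 := calc
  #s * c ^ 2 = ∑ i ∈ s, (u i - c) ^ 2 := by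
    rw [← nsmul_eq_mul, ← sum_const]
    exact sum_congr rfl fun i hi => by simp [hs i hi]
  _ ≤ ∑ i, (u i - c) ^ 2 := sum_le_univ_sum_of_nonneg fun i => sq_nonneg _

lemma one_sub_mul_sq_le {t : ℝ} (ht : 0 < t) (b d : ℝ) :
    (1 - t) * b ^ 2 ≤ (b + d) ^ 2 + d ^ 2 / t := by
  have : 0 ≤ (t * b + d) ^ 2 / t + d ^ 2 := by positivity
  have key : (b + d) ^ 2 + d ^ 2 / t - (1 - t) * b ^ 2 = (t * b + d) ^ 2 / t + d ^ 2 := by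
    field_simp; ring
  linarith

lemma one_sub_mul_card_mul_sq_le {t : ℝ} (ht : 0 < t) (p q : ι → ℝ) (b : ℝ) :
    (1 - t) * #{i | p i = 0 ∨ q i = 0} * b ^ 2 ≤
      ∑ i, p i ^ 2 + ∑ i, q i ^ 2 + (∑ i, (p i + q i - b) ^ 2) / t := by
  have hpt : ∀ i ∈ ({i | p i = 0 ∨ q i = 0} : Finset ι),
      (1 - t) * b ^ 2 ≤ p i ^ 2 + q i ^ 2 + (p i + q i - b) ^ 2 / t := by
    intro i hi
    have hpq : p i ^ 2 + q i ^ 2 = (b + (p i + q i - b)) ^ 2 := by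
      rcases (mem_filter.1 hi).2 with h | h <;> simp [h]
    rw [hpq]
    exact one_sub_mul_sq_le ht b _
  calc (1 - t) * #{i | p i = 0 ∨ q i = 0} * b ^ 2
      = ∑ i ∈ {i | p i = 0 ∨ q i = 0}, (1 - t) * b ^ 2 := by
        rw [sum_const, nsmul_eq_mul]; ring
    _ ≤ ∑ i ∈ {i | p i = 0 ∨ q i = 0}, (p i ^ 2 + q i ^ 2 + (p i + q i - b) ^ 2 / t) :=
        sum_le_sum hpt
    _ ≤ ∑ i, (p i ^ 2 + q i ^ 2 + (p i + q i - b) ^ 2 / t) :=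
        sum_le_univ_sum_of_nonneg fun i => by positivity
    _ = _ := by rw [sum_add_distrib, sum_add_distrib, sum_div]

theorem one_sub_mul_card_le_sum_sq_add_sum_sq {ξ : ℝ} (hξ : 0 < ξ) (p q v : ι → ℝ)
    (hnorm : ∑ i, p i ^ 2 + ∑ i, q i ^ 2 + ∑ i, v i ^ 2 = 2 * Fintype.card ι)
    (hsupp : (#{i | p i ≠ 0} + #{i | q i ≠ 0} + #{i | v i ≠ 0} : ℝ) ≤
      2 * (1 + ξ ^ 2) * Fintype.card ι)
    (hfit : ∑ i, (v i - 𝔼 j, v j) ^ 2 + ∑ i, (p i + q i - v i) ^ 2 ≤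
      2 * ξ ^ 2 * Fintype.card ι) :
    (1 - 3 * ξ - 6 * ξ ^ 2) * Fintype.card ι ≤ ∑ i, p i ^ 2 + ∑ i, q i ^ 2 := by
  have hsparse := card_sub_card_zero_or_zero_le p q v (c := 2 * ξ ^ 2 * Fintype.card ι)
    (by linarith)
  have hK : (#{i | p i = 0 ∨ q i = 0} : ℝ) ≤ Fintype.card ι := by
    exact_mod_cast (card_filter_le _ _).trans (card_univ (α := ι)).le
  set n : ℝ := (Fintype.card ι : ℝ)
  set b := 𝔼 j, v j
  set S := ∑ i, p i ^ 2 + ∑ i, q i ^ 2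
  set A := ∑ i, (v i - b) ^ 2
  set B := ∑ i, (p i + q i - v i) ^ 2
  set D := ∑ i, (p i + q i - b) ^ 2
  have hS : 0 ≤ S := by positivity
  have hA : 0 ≤ A := by positivity
  have hB : 0 ≤ B := by positivity
  have hmean : n * b ^ 2 = 2 * n - S - A := by
    have := sum_sq_sub_expect v
    linarith
  have hD : D ≤ 2 * (B + A) := calc
    D = ∑ i, ((p i + q i - v i) + (v i - b)) ^ 2 := sum_congr rfl fun i _ => by ring
    _ ≤ ∑ i, 2 * ((p i + q i - v i) ^ 2 + (v i - b) ^ 2) := sum_le_sum fun i _ => add_sq_le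
    _ = 2 * (B + A) := by rw [← mul_sum, sum_add_distrib]
  have hDξ : D / ξ ≤ 4 * ξ * n := by
    rw [div_le_iff₀ hξ]; linarith
  have hZb : #{i | v i = 0} * b ^ 2 ≤ A := card_mul_sq_le_sum_sq_sub (by simp) b
  have hJb : #{i | p i = 0 ∧ q i = 0} * b ^ 2 ≤ D :=
    card_mul_sq_le_sum_sq_sub (u := p + q) (fun i hi => by simp [(mem_filter.1 hi).2]) b
  set K : ℝ := (#{i | p i = 0 ∨ q i = 0} : ℝ)
  -- The weight `t = ξ` balances the losses `ξ K v̄² ≤ 2ξn` and `D / ξ ≤ 4ξn`.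
  have hKb : (1 - ξ) * K * b ^ 2 ≤ S + D / ξ := one_sub_mul_card_mul_sq_le hξ p q b
  have hsparse_mul := mul_le_mul_of_nonneg_right hsparse (sq_nonneg b)
  have hξK : ξ * (K * b ^ 2) ≤ ξ * (n * b ^ 2) :=
    mul_le_mul_of_nonneg_left (mul_le_mul_of_nonneg_right hK (sq_nonneg b)) hξ.le
  have hnb : n * b ^ 2 ≤ 2 * n := by linarith
  have hξn : ξ * (n * b ^ 2) ≤ ξ * (2 * n) := mul_le_mul_of_nonneg_left hnb hξ.le
  have hξ2n : ξ ^ 2 * (n * b ^ 2) ≤ ξ ^ 2 * (2 * n) := mul_le_mul_of_nonneg_left hnb (sq_nonneg ξ)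
  linarith

end

lemma Function.ncard_support_eq_card_filter {α M : Type*} [Fintype α] [Zero M] (f : α → M)
    [DecidablePred (f · ≠ 0)] : (Function.support f).ncard = #{i | f i ≠ 0} := by
  rw [← Set.ncard_coe_finset, coe_filter_univ, Function.support]

lemma Finset.card_filter_sum_type {α β : Type*} [Fintype α] [Fintype β] (P : α ⊕ β → Prop)
    [DecidablePred P] : #{i | P i} = #{a | P (.inl a)} + #{b | P (.inr b)} := by
  simp only [card_filter, Fintype.sum_sum_type]

section

variable {n m : ℕ} (Φ : Matrix (Fin m) (Fin n) ℝ) (ε ξ : ℝ) (w : Fin n ⊕ Fin n ⊕ Fin n → ℝ)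

lemma Xt_mulVec_inl (i : Fin n) : (Xt n m Φ ε ξ *ᵥ w) (.inl i) = w (.inl i) := by
  simp [mulVec, dotProduct, Fintype.sum_sum_type, Xt, ite_mul]

lemma Xt_mulVec_inr_inl (i : Fin n) :
    (Xt n m Φ ε ξ *ᵥ w) (.inr (.inl i)) = w (.inr (.inl i)) := by
  simp [mulVec, dotProduct, Fintype.sum_sum_type, Xt, ite_mul]

lemma Xt_mulVec_inr_inr_inl (i : Fin n) :
    (Xt n m Φ ε ξ *ᵥ w) (.inr (.inr (.inl i))) =
      ξ⁻¹ * (w (.inr (.inr i)) - 𝔼 j, w (.inr (.inr j))) := by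
  simp [mulVec, dotProduct, Fintype.sum_sum_type, Xt, Fintype.expect_eq_sum_div_card,
    sub_mul, sum_sub_distrib, ← mul_sum, mul_sub, ite_mul, div_eq_inv_mul, mul_assoc]

lemma Xt_mulVec_inr_inr_inr_inl (i : Fin n) :
    (Xt n m Φ ε ξ *ᵥ w) (.inr (.inr (.inr (.inl i)))) =
      ξ⁻¹ * (w (.inl i) + w (.inr (.inl i)) - w (.inr (.inr i))) := by
  simp only [mulVec, dotProduct, Xt, mul_ite, mul_one, mul_zero, of_apply, Fintype.sum_sum_type,
    ite_mul, zero_mul, sum_ite_eq, mem_univ, ↓reduceIte, neg_mul]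
  ring

lemma sum_sq_add_inv_sq_mul_le_sum_sq_Xt_mulVec :
    ∑ i, w (.inl i) ^ 2 + ∑ i, w (.inr (.inl i)) ^ 2 +
      ξ⁻¹ ^ 2 * (∑ i, (w (.inr (.inr i)) - 𝔼 j, w (.inr (.inr j))) ^ 2 +
        ∑ i, (w (.inl i) + w (.inr (.inl i)) - w (.inr (.inr i))) ^ 2) ≤
      ∑ i, (Xt n m Φ ε ξ *ᵥ w) i ^ 2 := by
  simp only [Fintype.sum_sum_type, Xt_mulVec_inl, Xt_mulVec_inr_inl, Xt_mulVec_inr_inr_inl,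
    Xt_mulVec_inr_inr_inr_inl, mul_pow, ← mul_sum]
  have : 0 ≤ ∑ i : Fin m, (Xt n m Φ ε ξ *ᵥ w) (.inr (.inr (.inr (.inr i)))) ^ 2 := by positivity
  linarith

end

theorem stmt_15_general {n m : ℕ} (hn : 0 < n)
    (Φ : Matrix (Fin m) (Fin n) ℝ)
    (ε ξ : ℝ) (hξ : 0 < ξ) (hξε : ξ ≤ ε) (hε : ε ^ 2 < 1 / 6)
    (w : (Fin n ⊕ Fin n ⊕ Fin n) → ℝ)
    (hw : ∑ j, w j ^ 2 = 2 * n)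
    (hw0 : ((Function.support w).ncard : ℝ) ≤ 2 * (1 + ξ ^ 2) * n)
    (hXw : ∑ i, ((Xt n m Φ ε ξ).mulVec w i) ^ 2 ≤ (1 + ε ^ 2) * n) :
    ∑ i, w (Sum.inl i) ^ 2 + ∑ i, w (Sum.inr (Sum.inl i)) ^ 2 > (1 - 25 * ξ) * n := by
  have hξ1 : ξ < 1 := by nlinarith
  have hnorm : ∑ i, w (.inl i) ^ 2 + ∑ i, w (.inr (.inl i)) ^ 2 + ∑ i, w (.inr (.inr i)) ^ 2 =
      2 * Fintype.card (Fin n) := by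
    rw [Fintype.card_fin, ← hw, Fintype.sum_sum_type, Fintype.sum_sum_type, add_assoc]
  have hsupp : (#{i | w (.inl i) ≠ 0} + #{i | w (.inr (.inl i)) ≠ 0} +
      #{i | w (.inr (.inr i)) ≠ 0} : ℝ) ≤ 2 * (1 + ξ ^ 2) * Fintype.card (Fin n) := by
    rw [Function.ncard_support_eq_card_filter, card_filter_sum_type, card_filter_sum_type] at hw0
    push_cast at hw0
    rwa [Fintype.card_fin, add_assoc]
  have hfit : ∑ i, (w (.inr (.inr i)) - 𝔼 j, w (.inr (.inr j))) ^ 2 +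
      ∑ i, (w (.inl i) + w (.inr (.inl i)) - w (.inr (.inr i))) ^ 2 ≤
      2 * ξ ^ 2 * Fintype.card (Fin n) := by
    have hX := (sum_sq_add_inv_sq_mul_le_sum_sq_Xt_mulVec Φ ε ξ w).trans hXw
    rw [inv_pow] at hX
    rw [Fintype.card_fin, mul_comm 2, mul_assoc, ← inv_mul_le_iff₀ (by positivity)]
    nlinarith [sum_nonneg fun i (_ : i ∈ univ) => sq_nonneg (w (.inl i)),
      sum_nonneg fun i (_ : i ∈ univ) => sq_nonneg (w (.inr (.inl i)))]
  have hS := one_sub_mul_card_le_sum_sq_add_sum_sq hξ _ _ _ hnorm hsupp hfit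
  rw [Fintype.card_fin] at hS
  have hgap : 0 < ξ * n * (22 - 6 * ξ) :=
    mul_pos (mul_pos hξ (Nat.cast_pos.2 hn)) (by linarith)
  linarith

/-- Proposition 5 of the paper: if `ε² < 1/6`, `ξ ≤ ε`, `‖w‖² = 2n`,
`‖w‖₀ ≤ 2(1+ξ²)n` and `‖X̃w‖² ≤ (1+ε²)n`, then `‖w⁺‖² + ‖w⁻‖² > (1 - 25ξ)n`. -/
theorem stmt_15 {n m : ℕ} (hn : 0 < n)
    (Φ : Matrix (Fin m) (Fin n) ℝ) (hΦ : ∀ i j, Φ i j = 0 ∨ Φ i j = 1)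
    (ε ξ : ℝ) (hξ : 0 < ξ) (hξε : ξ ≤ ε) (hε : ε ^ 2 < 1 / 6)
    (w : (Fin n ⊕ Fin n ⊕ Fin n) → ℝ)
    (hw : ∑ j, w j ^ 2 = 2 * n)
    (hw0 : ((Function.support w).ncard : ℝ) ≤ 2 * (1 + ξ ^ 2) * n)
    (hXw : ∑ i, ((Xt n m Φ ε ξ).mulVec w i) ^ 2 ≤ (1 + ε ^ 2) * n) :
    ∑ i, w (Sum.inl i) ^ 2 + ∑ i, w (Sum.inr (Sum.inl i)) ^ 2 > (1 - 25 * ξ) * n :=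
  stmt_15_general hn Φ ε ξ hξ hξε hε w hw hw0 hXw
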